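/- arXiv:2401.00078 — 8 statements merged into one kernel-verified Lean document; each statement's English description precedes it below -/
import Mathlib

section
/- Let f₁,…,f_n ∈ ℝ[x₁,…,x_n], let I = ⟨f₁,…,f_n⟩, let m = x₁x₂⋯x_n, and fix i ∈ {1,…,n}. If at least one of the following holds: (1) there exists α > 0 with x_i − α ∈ I; (2) there exists α > 0 with x_i − α ∈ (I : m^∞); (3) there exists a nonzero univariate polynomial g ∈ I ∩ ℝ[x_i] having exactly one root in ℝ_{>0}; then the system has ACR in species i. -/
open MvPolynomial

/-- Sufficient conditions for ACR in terms of the steady-state ideal `I = ⟨f₁,…,fₙ⟩`: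
(1) `Xᵢ - α ∈ I` for some `α > 0`; (2) `Xᵢ - α` lies in the saturation `(I : m^∞)`
where `m = x₁⋯xₙ`; (3) `I` contains a nonzero univariate polynomial in `xᵢ` with exactly one
positive real root.  Each implies ACR in species `i`. -/
theorem stmt_2 (n : ℕ) (f : Fin n → MvPolynomial (Fin n) ℝ) (i : Fin n)
    (I : Ideal (MvPolynomial (Fin n) ℝ)) (hI : I = Ideal.span (Set.range f))
    (m : MvPolynomial (Fin n) ℝ) (hm : m = ∏ j, X j)
    (hyp : (∃ α : ℝ, 0 < α ∧ X i - C α ∈ I) ∨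
           (∃ α : ℝ, 0 < α ∧ ∃ k : ℕ, m ^ k * (X i - C α) ∈ I) ∨
           (∃ p : Polynomial ℝ, p ≠ 0 ∧
              Polynomial.aeval (X i : MvPolynomial (Fin n) ℝ) p ∈ I ∧
              ∃! t : ℝ, 0 < t ∧ Polynomial.eval t p = 0)) :
    ∀ x y : Fin n → ℝ,
      (∀ j, 0 < x j) → (∀ j, eval x (f j) = 0) →
      (∀ j, 0 < y j) → (∀ j, eval y (f j) = 0) →
      x i = y i := by
  intro x y hx hfx hy hfy
  have key : ∀ (z : Fin n → ℝ), (∀ j, eval z (f j) = 0) → ∀ g ∈ I, eval z g = 0 := by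
    intro z hz g hg
    rw [hI] at hg
    have hle : Ideal.span (Set.range f) ≤ RingHom.ker (eval z) := by
      rw [Ideal.span_le]
      rintro _ ⟨j, rfl⟩
      exact hz j
    exact hle hg
  rcases hyp with ⟨α, hα, hmem⟩ | ⟨α, hα, k, hmem⟩ | ⟨p, hp0, hmem, t, ⟨ht, hpt⟩, huniq⟩
  · have h1 := key x hfx _ hmem
    have h2 := key y hfy _ hmem
    simp [eval_X, eval_C] at h1 h2
    rw [sub_eq_zero] at h1 h2
    rw [h1, h2]
  · have h1 := key x hfx _ hmem
    have h2 := key y hfy _ hmem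
    simp [hm, eval_X, eval_C] at h1 h2
    have hxp : (0:ℝ) < ∏ j, x j := Finset.prod_pos (fun j _ => hx j)
    have hyp' : (0:ℝ) < ∏ j, y j := Finset.prod_pos (fun j _ => hy j)
    have h1' : x i - α = 0 := by
      rcases h1 with ⟨h, -⟩ | h
      · exact absurd h (ne_of_gt hxp)
      · exact h
    have h2' : y i - α = 0 := by
      rcases h2 with ⟨h, -⟩ | h
      · exact absurd h (ne_of_gt hyp')
      · exact h
    rw [sub_eq_zero] at h1' h2'
    rw [h1', h2']
  · have h1 := key x hfx _ hmem
    have h2 := key y hfy _ hmem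
    have e1 : eval x (Polynomial.aeval (X i : MvPolynomial (Fin n) ℝ) p) =
        Polynomial.eval (x i) p := by
      rw [Polynomial.aeval_def, Polynomial.eval₂_eq_sum, Polynomial.eval_eq_sum,
        Polynomial.sum, Polynomial.sum, map_sum]
      simp
    have e2 : eval y (Polynomial.aeval (X i : MvPolynomial (Fin n) ℝ) p) =
        Polynomial.eval (y i) p := by
      rw [Polynomial.aeval_def, Polynomial.eval₂_eq_sum, Polynomial.eval_eq_sum,
        Polynomial.sum, Polynomial.sum, map_sum]
      simp
    have hx' : x i = t := huniq (x i) ⟨hx i, by rw [← e1, h1]⟩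
    have hy' : y i = t := huniq (y i) ⟨hy i, by rw [← e2, h2]⟩
    rw [hx', hy']
end

section
/- Let f₁,…,f_n ∈ ℝ[x₁,…,x_n], fix i ∈ {1,…,n}, let √[>0]I denote the ideal of the positive steady-state locus, and let V_ℝ(√[>0]I) = {x ∈ ℝⁿ : h(x) = 0 for all h ∈ √[>0]I}, equipped with the Euclidean topology. Then the system has ACR in species i if and only if there exists α > 0 such that every connected component of V_ℝ(√[>0]I) is contained in the hyperplane {x ∈ ℝⁿ : x_i = α}. -/
open MvPolynomial

/-- ACR in species `i` holds iff there exists `α > 0` such that every connected component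
of the real variety of the ideal of the positive steady-state locus is contained in the
hyperplane `{xᵢ = α}`. -/
theorem stmt_9 (n : ℕ) (f : Fin n → MvPolynomial (Fin n) ℝ) (i : Fin n)
    (sqI : Set (MvPolynomial (Fin n) ℝ))
    (hsqI : sqI = {h | ∀ x : Fin n → ℝ,
      (∀ j, 0 < x j) → (∀ j, eval x (f j) = 0) → eval x h = 0})
    (V : Set (Fin n → ℝ)) (hV : V = {x | ∀ h ∈ sqI, eval x h = 0}) :
    (∀ x y : Fin n → ℝ,
        (∀ j, 0 < x j) → (∀ j, eval x (f j) = 0) →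
        (∀ j, 0 < y j) → (∀ j, eval y (f j) = 0) →
        x i = y i)
    ↔ ∃ α : ℝ, 0 < α ∧
        ∀ x ∈ V, connectedComponentIn V x ⊆ {y : Fin n → ℝ | y i = α} := by
  subst hsqI; subst hV
  constructor
  · intro hacr
    by_cases hex : ∃ x : Fin n → ℝ, (∀ j, 0 < x j) ∧ (∀ j, eval x (f j) = 0)
    · obtain ⟨x₀, hx₀pos, hx₀ss⟩ := hex
      refine ⟨x₀ i, hx₀pos i, ?_⟩
      intro x hx y hy
      have hyV := connectedComponentIn_subset
        {x : Fin n → ℝ | ∀ h ∈ {h : MvPolynomial (Fin n) ℝ | ∀ z : Fin n → ℝ,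
          (∀ j, 0 < z j) → (∀ j, eval z (f j) = 0) → eval z h = 0}, eval x h = 0} x hy
      have hp : (X i - C (x₀ i) : MvPolynomial (Fin n) ℝ) ∈
          {h : MvPolynomial (Fin n) ℝ | ∀ z : Fin n → ℝ,
            (∀ j, 0 < z j) → (∀ j, eval z (f j) = 0) → eval z h = 0} := by
        intro z hzpos hzss
        simp [hacr z x₀ hzpos hzss hx₀pos hx₀ss]
      have := hyV _ hp
      simpa [sub_eq_zero] using this
    · refine ⟨1, one_pos, ?_⟩
      intro x hx
      exfalso
      have h1 : (1 : MvPolynomial (Fin n) ℝ) ∈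
          {h : MvPolynomial (Fin n) ℝ | ∀ z : Fin n → ℝ,
            (∀ j, 0 < z j) → (∀ j, eval z (f j) = 0) → eval z h = 0} :=
        fun z hz hzz => absurd ⟨z, hz, hzz⟩ hex
      have := hx _ h1
      simp at this
  · rintro ⟨α, hα, hsub⟩ x y hxp hxs hyp hys
    have hxV : x ∈ {x : Fin n → ℝ | ∀ h ∈ {h : MvPolynomial (Fin n) ℝ | ∀ z : Fin n → ℝ,
        (∀ j, 0 < z j) → (∀ j, eval z (f j) = 0) → eval z h = 0}, eval x h = 0} :=
      fun h hh => hh x hxp hxs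
    have hyV : y ∈ {x : Fin n → ℝ | ∀ h ∈ {h : MvPolynomial (Fin n) ℝ | ∀ z : Fin n → ℝ,
        (∀ j, 0 < z j) → (∀ j, eval z (f j) = 0) → eval z h = 0}, eval x h = 0} :=
      fun h hh => hh y hyp hys
    have hx := hsub x hxV (mem_connectedComponentIn hxV)
    have hy := hsub y hyV (mem_connectedComponentIn hyV)
    simp only [Set.mem_setOf_eq] at hx hy
    rw [hx, hy]
end

section
/- Let f₁,…,f_n ∈ ℂ[x₁,…,x_n], let I = ⟨f₁,…,f_n⟩, let m = x₁x₂⋯x_n, fix i ∈ {1,…,n}, and let α ∈ ℂ with α ≠ 0. The following are equivalent: (1) the set of common zeros of f₁,…,f_n in (ℂ*)ⁿ (points with all coordinates nonzero) is nonempty and every such zero x satisfies x_i = α; (2) x_i − α ∈ √(I : m^∞) and √(I : m^∞) ≠ ⟨1⟩; (3) x_i − α generates the ideal √((I : m^∞) ∩ ℂ[x_i]) of the univariate polynomial ring ℂ[x_i]. -/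
/-!
By the Nullstellensatz, `√(I : m^∞)` is the ideal of polynomials vanishing on `V(I) ∖ V(m)`,
i.e. on the common zeros of the `fⱼ` in the torus: `m^j g^k ∈ I` forces `g` to vanish wherever
`m` does not, and conversely if `g` vanishes there then `m g` vanishes on all of `V(I)`, so
`(m g)^k ∈ I`. Then (1) ⇔ (2) is read off: `xᵢ - α` lies in this ideal iff every torus zero has
`xᵢ = α`, and the ideal is proper iff there is a torus zero. For (2) ⇔ (3), the radical of the
elimination ideal is the preimage of `√(I : m^∞)` under `ℂ[xᵢ] → ℂ[x]`, and `⟨xᵢ - α⟩` is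
maximal, so that preimage equals it iff it contains `xᵢ - α` and is proper.
-/

open MvPolynomial

section Saturation

variable {σ K : Type*} [Field K]

theorem X_sub_C_mem_vanishingIdeal_iff (V : Set (σ → K)) (i : σ) (a : K) :
    X i - C a ∈ vanishingIdeal K V ↔ ∀ x ∈ V, x i = a := by
  simp [sub_eq_zero]

theorem vanishingIdeal_ne_top_iff (V : Set (σ → K)) :
    vanishingIdeal K V ≠ ⊤ ↔ V.Nonempty := by
  simp [Ideal.eq_top_iff_one, Set.Nonempty]

theorem mem_zeroLocus_span_range_iff {ι : Type*} (f : ι → MvPolynomial σ K) (x : σ → K) :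
    x ∈ zeroLocus K (Ideal.span (Set.range f)) ↔ ∀ j, eval x (f j) = 0 := by
  simp only [mem_zeroLocus_iff, aeval_eq_eval]
  exact Ideal.span_le (I := RingHom.ker (eval x)).trans Set.range_subset_iff

theorem eval_prod_X_ne_zero_iff [Fintype σ] (x : σ → K) :
    eval x (∏ j, X j) ≠ 0 ↔ ∀ j, x j ≠ 0 := by
  simp [Finset.prod_ne_zero_iff]

theorem radical_eq_vanishingIdeal_of_saturation [IsAlgClosed K] [Finite σ]
    {I J : Ideal (MvPolynomial σ K)} {m : MvPolynomial σ K}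
    (hJ : ∀ g, g ∈ J ↔ ∃ k : ℕ, m ^ k * g ∈ I) :
    J.radical = vanishingIdeal K (zeroLocus K I ∩ {x | eval x m ≠ 0}) := by
  ext g
  simp only [mem_vanishingIdeal_iff, Set.mem_inter_iff, and_imp, aeval_eq_eval]
  constructor
  · rintro ⟨k, hk⟩ x hx hmx
    obtain ⟨j, hj⟩ := (hJ _).1 hk
    have hzero : eval x m ^ j * eval x g ^ k = 0 := by simpa using hx _ hj
    exact eq_zero_of_pow_eq_zero ((mul_eq_zero.1 hzero).resolve_left (pow_ne_zero _ hmx))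
  · intro h
    have hmg : m * g ∈ I.radical := by
      rw [← vanishingIdeal_zeroLocus_eq_radical (K := K)]
      intro x hx
      rw [aeval_eq_eval, map_mul, mul_eq_zero]
      exact or_iff_not_imp_left.2 (h x hx)
    obtain ⟨k, hk⟩ := hmg
    exact ⟨k, (hJ _).2 ⟨k, mul_pow m g k ▸ hk⟩⟩

theorem radical_saturation_eq_vanishingIdeal_torus_zeros [IsAlgClosed K] [Fintype σ]
    {ι : Type*} (f : ι → MvPolynomial σ K) {J : Ideal (MvPolynomial σ K)}
    (hJ : ∀ g, g ∈ J ↔ ∃ k : ℕ, (∏ j, X j) ^ k * g ∈ Ideal.span (Set.range f)) :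
    J.radical = vanishingIdeal K {x | (∀ j, x j ≠ 0) ∧ ∀ j, eval x (f j) = 0} := by
  rw [radical_eq_vanishingIdeal_of_saturation hJ]
  congr 1
  ext x
  exact (and_congr (mem_zeroLocus_span_range_iff f x) (eval_prod_X_ne_zero_iff x)).trans and_comm

end Saturation

theorem Ideal.comap_eq_iff_of_isMaximal {R A F : Type*} [CommRing R] [CommRing A]
    [FunLike F R A] [RingHomClass F R A] (φ : F) {M : Ideal R} (hM : M.IsMaximal)
    (J : Ideal A) : J.comap φ = M ↔ M.map φ ≤ J ∧ J ≠ ⊤ := by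
  rw [Ideal.map_le_iff_le_comap, Ne, ← Ideal.comap_eq_top_iff (f := φ) (I := J)]
  exact ⟨fun h => ⟨h.ge, h ▸ hM.ne_top⟩, fun ⟨hle, hne⟩ => (hM.eq_of_le hne hle).symm⟩

theorem stmt_13_general (n : ℕ) (f : Fin n → MvPolynomial (Fin n) ℂ) (i : Fin n)
    (I : Ideal (MvPolynomial (Fin n) ℂ)) (hI : I = Ideal.span (Set.range f))
    (m : MvPolynomial (Fin n) ℂ) (hm : m = ∏ j, X j)
    (sat : Ideal (MvPolynomial (Fin n) ℂ))
    (hsat : ∀ g, g ∈ sat ↔ ∃ k : ℕ, m ^ k * g ∈ I)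
    (α : ℂ) :
    (((∃ x : Fin n → ℂ, (∀ j, x j ≠ 0) ∧ ∀ j, eval x (f j) = 0) ∧
        ∀ x : Fin n → ℂ, (∀ j, x j ≠ 0) → (∀ j, eval x (f j) = 0) → x i = α)
      ↔ ((X i - C α) ∈ sat.radical ∧ sat.radical ≠ ⊤)) ∧
    (((X i - C α) ∈ sat.radical ∧ sat.radical ≠ ⊤)
      ↔ (Ideal.comap (Polynomial.aeval (X i : MvPolynomial (Fin n) ℂ)) sat).radical
          = Ideal.span {Polynomial.X - Polynomial.C α}) := by
  subst hI hm
  have hmax : (Ideal.span {Polynomial.X - Polynomial.C α}).IsMaximal :=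
    PrincipalIdealRing.isMaximal_of_irreducible (Polynomial.irreducible_X_sub_C α)
  refine ⟨?_, ?_⟩
  · rw [radical_saturation_eq_vanishingIdeal_torus_zeros f hsat, X_sub_C_mem_vanishingIdeal_iff,
      vanishingIdeal_ne_top_iff, and_comm]
    simp only [Set.Nonempty, Set.mem_ofPred_eq, and_imp]
  · rw [← Ideal.comap_radical, Ideal.comap_eq_iff_of_isMaximal _ hmax, Ideal.map_span,
      Set.image_singleton, Ideal.span_singleton_le_iff_mem, Polynomial.aeval_sub, Polynomial.aeval_X, Polynomial.aeval_C, algebraMap_eq]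

/-- For `α ∈ ℂ*`, the following are equivalent: (1) the common zeros of `f₁,…,fₙ` in
`(ℂ*)ⁿ` are nonempty and all have `i`-th coordinate `α`; (2) `xᵢ - α ∈ √(I : m^∞)` and
`√(I : m^∞) ≠ ⟨1⟩`; (3) `xᵢ - α` generates the radical of the elimination ideal
`(I : m^∞) ∩ ℂ[xᵢ]`. -/
theorem stmt_13 (n : ℕ) (f : Fin n → MvPolynomial (Fin n) ℂ) (i : Fin n)
    (I : Ideal (MvPolynomial (Fin n) ℂ)) (hI : I = Ideal.span (Set.range f))
    (m : MvPolynomial (Fin n) ℂ) (hm : m = ∏ j, X j)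
    (sat : Ideal (MvPolynomial (Fin n) ℂ))
    (hsat : ∀ g, g ∈ sat ↔ ∃ k : ℕ, m ^ k * g ∈ I)
    (α : ℂ) (hα : α ≠ 0) :
    (((∃ x : Fin n → ℂ, (∀ j, x j ≠ 0) ∧ ∀ j, eval x (f j) = 0) ∧
        ∀ x : Fin n → ℂ, (∀ j, x j ≠ 0) → (∀ j, eval x (f j) = 0) → x i = α)
      ↔ ((X i - C α) ∈ sat.radical ∧ sat.radical ≠ ⊤)) ∧
    (((X i - C α) ∈ sat.radical ∧ sat.radical ≠ ⊤)
      ↔ (Ideal.comap (Polynomial.aeval (X i : MvPolynomial (Fin n) ℂ)) sat).radical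
          = Ideal.span {Polynomial.X - Polynomial.C α}) :=
  stmt_13_general n f i I hI m hm sat hsat α
end

section
/- Fix rate constants κ₁,…,κ₉ ∈ ℝ_{>0} and consider the polynomials in ℝ[x₁,…,x₇]: g₁ = −κ₁x₁ + κ₂x₂ + κ₆x₆, g₂ = κ₃x₂ − κ₄x₃x₄ + κ₅x₆, g₃ = κ₆x₆ − κ₇x₂x₅ + κ₈x₇, g₄ = κ₄x₃x₄ − (κ₅+κ₆)x₆, g₅ = κ₇x₂x₅ − (κ₈+κ₉)x₇ (the steady-state polynomials of the Shinar–Feinberg EnvZ–OmpR network). Then every point x ∈ ℝ⁷_{>0} with g₁(x) = g₂(x) = g₃(x) = g₄(x) = g₅(x) = 0 satisfies x₅ = κ₃(κ₈+κ₉)/(κ₇κ₉); that is, the system has ACR in the species Y_p (the fifth species) with ACR-value κ₃(κ₈+κ₉)/(κ₇κ₉) for every choice of positive rate constants. -/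
/-- The Shinar–Feinberg EnvZ–OmpR network has ACR in `Y_p` (the fifth species, `x 4`)
with ACR-value `κ₃(κ₈+κ₉)/(κ₇κ₉)`, for every choice of positive rate constants.
Here `κ 0, …, κ 8` are `κ₁, …, κ₉` and `x 0, …, x 6` are `x₁, …, x₇`. -/
theorem stmt_14 (κ : Fin 9 → ℝ) (hκ : ∀ j, 0 < κ j)
    (x : Fin 7 → ℝ) (hx : ∀ j, 0 < x j)
    (h1 : -κ 0 * x 0 + κ 1 * x 1 + κ 5 * x 5 = 0)
    (h2 : κ 2 * x 1 - κ 3 * x 2 * x 3 + κ 4 * x 5 = 0)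
    (h3 : κ 5 * x 5 - κ 6 * x 1 * x 4 + κ 7 * x 6 = 0)
    (h4 : κ 3 * x 2 * x 3 - (κ 4 + κ 5) * x 5 = 0)
    (h5 : κ 6 * x 1 * x 4 - (κ 7 + κ 8) * x 6 = 0) :
    x 4 = κ 2 * (κ 7 + κ 8) / (κ 6 * κ 8) := by
  have hx1 : (0:ℝ) < x 1 := hx 1
  have hκ6 : (0:ℝ) < κ 6 := hκ 6
  have hκ8 : (0:ℝ) < κ 8 := hκ 8
  have e1 : κ 2 * x 1 = κ 5 * x 5 := by linarith
  have e2 : κ 5 * x 5 = κ 8 * x 6 := by linarith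
  have key : κ 8 * (κ 6 * x 1 * x 4) = (κ 7 + κ 8) * (κ 2 * x 1) := by
    have : κ 6 * x 1 * x 4 = (κ 7 + κ 8) * x 6 := by linarith
    rw [this]; linear_combination -(κ 7 + κ 8) * e1 - (κ 7 + κ 8) * e2
  have hx4 : x 4 * (κ 6 * κ 8) = κ 2 * (κ 7 + κ 8) := by
    exact mul_left_cancel₀ hx1.ne' (show x 1 * (x 4 * (κ 6 * κ 8)) = x 1 * (κ 2 * (κ 7 + κ 8)) by linear_combination key)
  field_simp
  linarith [hx4]
end

section
/- Fix rate constants κ₁,…,κ₁₂ ∈ ℝ_{>0} and consider the polynomials in ℝ[x₁,…,x₈]: p₁ = −κ₁x₁x₄ + κ₂x₅ + κ₁₂x₈; p₂ = κ₃x₅ + κ₅x₆ − κ₄x₂x₄ − κ₇x₂x₅ + κ₈x₇; p₃ = κ₆x₆ + κ₉x₇ − κ₁₀x₃x₅ + κ₁₁x₈; p₄ = −κ₁x₁x₄ + (κ₂+κ₃)x₅ − κ₄x₂x₄ + (κ₅+κ₆)x₆; p₅ = κ₁x₁x₄ − (κ₂+κ₃)x₅ − κ₇x₂x₅ + (κ₈+κ₉)x₇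 − κ₁₀x₃x₅ + (κ₁₁+κ₁₂)x₈; p₆ = κ₄x₂x₄ − (κ₅+κ₆)x₆; p₇ = κ₇x₂x₅ − (κ₈+κ₉)x₇; p₈ = κ₁₀x₃x₅ − (κ₁₁+κ₁₂)x₈ (the steady-state polynomials of the Joshi–Nguyen bifunctional-enzyme network). Then every point x ∈ ℝ⁸_{>0} with p₁(x) = ⋯ = p₈(x) = 0 satisfies x₃ = κ₃(κ₁₁+κ₁₂)/(κ₁₀κ₁₂); that is, for every choice of positive rate constants the system has ACR in the species S₃ (the third species) with ACR-value κ₃(κ₁₁+κ₁₂)/(κ₁₀κ₁₂). -/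
/-!
Adding p₂, p₃, p₆, p₇ and p₈ shows that at steady state the flux κ₃x₅ of `C₁ → S₂ + E` equals the
flux κ₁₂x₈ of `C₄ → S₁ + C₁`. Together with p₈ = 0, i.e. κ₁₀x₃x₅ = (κ₁₁+κ₁₂)x₈, dividing by
x₅ > 0 determines x₃.
-/

theorem eq_div_of_mul_mul_eq_of_mul_eq {K : Type*} [Field K] {a b c k s e y : K}
    (ha : a ≠ 0) (hc : c ≠ 0) (he : e ≠ 0)
    (hbind : a * s * e = b * y) (hflux : k * e = c * y) :
    s = k * b / (a * c) := by
  rw [eq_div_iff (mul_ne_zero ha hc)]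
  refine mul_right_cancel₀ he ?_
  linear_combination c * hbind - b * hflux

/-- Indices are shifted: `κ 0, …, κ 11` are `κ₁, …, κ₁₂` and `x 0, …, x 7` are `x₁, …, x₈`. -/
theorem stmt_15_general (κ : Fin 12 → ℝ) (hκ : ∀ j, 0 < κ j)
    (x : Fin 8 → ℝ) (hx : ∀ j, 0 < x j)
    (h2 : κ 2 * x 4 + κ 4 * x 5 - κ 3 * x 1 * x 3 - κ 6 * x 1 * x 4 + κ 7 * x 6 = 0)
    (h3 : κ 5 * x 5 + κ 8 * x 6 - κ 9 * x 2 * x 4 + κ 10 * x 7 = 0)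
    (h6 : κ 3 * x 1 * x 3 - (κ 4 + κ 5) * x 5 = 0)
    (h7 : κ 6 * x 1 * x 4 - (κ 7 + κ 8) * x 6 = 0)
    (h8 : κ 9 * x 2 * x 4 - (κ 10 + κ 11) * x 7 = 0) :
    x 2 = κ 2 * (κ 10 + κ 11) / (κ 9 * κ 11) := by
  have hflux : κ 2 * x 4 = κ 11 * x 7 := by linear_combination h2 + h3 + h6 + h7 + h8
  exact eq_div_of_mul_mul_eq_of_mul_eq (hκ 9).ne' (hκ 11).ne' (hx 4).ne'
    (by linear_combination h8) hflux

/-- The Joshi–Nguyen bifunctional-enzyme network has ACR in `S₃` (the third species, `x 2`)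
with ACR-value `κ₃(κ₁₁+κ₁₂)/(κ₁₀κ₁₂)`, for every choice of positive rate constants.
Here `κ 0, …, κ 11` are `κ₁, …, κ₁₂` and `x 0, …, x 7` are `x₁, …, x₈`. -/
theorem stmt_15 (κ : Fin 12 → ℝ) (hκ : ∀ j, 0 < κ j)
    (x : Fin 8 → ℝ) (hx : ∀ j, 0 < x j)
    (h1 : -κ 0 * x 0 * x 3 + κ 1 * x 4 + κ 11 * x 7 = 0)
    (h2 : κ 2 * x 4 + κ 4 * x 5 - κ 3 * x 1 * x 3 - κ 6 * x 1 * x 4 + κ 7 * x 6 = 0)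
    (h3 : κ 5 * x 5 + κ 8 * x 6 - κ 9 * x 2 * x 4 + κ 10 * x 7 = 0)
    (h4 : -κ 0 * x 0 * x 3 + (κ 1 + κ 2) * x 4 - κ 3 * x 1 * x 3 + (κ 4 + κ 5) * x 5 = 0)
    (h5 : κ 0 * x 0 * x 3 - (κ 1 + κ 2) * x 4 - κ 6 * x 1 * x 4 + (κ 7 + κ 8) * x 6
            - κ 9 * x 2 * x 4 + (κ 10 + κ 11) * x 7 = 0)
    (h6 : κ 3 * x 1 * x 3 - (κ 4 + κ 5) * x 5 = 0)
    (h7 : κ 6 * x 1 * x 4 - (κ 7 + κ 8) * x 6 = 0)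
    (h8 : κ 9 * x 2 * x 4 - (κ 10 + κ 11) * x 7 = 0) :
    x 2 = κ 2 * (κ 10 + κ 11) / (κ 9 * κ 11) :=
  stmt_15_general κ hκ x hx h2 h3 h6 h7 h8
end

section
/- Let f_A = x_A·((x_A−1)² + (x_B−2)²) and f_B = x_B·((x_A−1)² + (x_B−2)²) in ℝ[x_A, x_B], and let I = ⟨f_A, f_B⟩. Then: (i) the set of points (a,b) ∈ ℝ² with a > 0, b > 0 and f_A(a,b) = f_B(a,b) = 0 is exactly {(1,2)}, so the system has ACR in both species with ACR-values 1 and 2, respectively; and (ii) x_A − 1 ∉ I, and x_A − 1 is not a zero-divisor of I, i.e., for every g ∈ ℝ[x_A, x_B], if (x_A − 1)·g ∈ I then g ∈ I. -/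
/-!
Writing `q = (x_A - 1)² + (x_B - 2)²`, the ideal is `I = q · (x_A, x_B)`. As a monic quadratic in
`x_A` over `ℝ[x_B]`, `q` is irreducible because `-(x_B - 2)²` is not a square, so `q` is prime.
If `(x_A - 1) g ∈ I`, then `q ∣ g` since `q ∤ x_A - 1`, say `g = q h`, and cancelling `q` gives
`(x_A - 1) h ∈ (x_A, x_B)`. This ideal is the kernel of the constant coefficient, hence prime,
and does not contain `x_A - 1`; so `h ∈ (x_A, x_B)` and `g ∈ I`.
-/

open MvPolynomial

theorem Polynomial.irreducible_X_sub_C_sq_add_C {R : Type*} [CommRing R] [IsDomain R]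
    {a c : R} (hc : ¬IsSquare (-c)) :
    Irreducible ((Polynomial.X - Polynomial.C a) ^ 2 + Polynomial.C c) := by
  have hdeg : ((Polynomial.X - Polynomial.C a) ^ 2 + Polynomial.C c).natDegree = 2 := by
    rw [Polynomial.natDegree_add_C, Polynomial.natDegree_pow, Polynomial.natDegree_X_sub_C]
  have hmonic : ((Polynomial.X - Polynomial.C a) ^ 2 + Polynomial.C c).Monic := by
    monicity!
  by_contra hred
  obtain ⟨c₁, c₂, h0, h1⟩ :=
    (hmonic.not_irreducible_iff_exists_add_mul_eq_coeff hdeg).mp hred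
  rw [sub_sq, ← Polynomial.C_pow, mul_comm 2, mul_assoc, ← Polynomial.C_ofNat,
    ← Polynomial.C_mul] at h0 h1
  simp [Polynomial.coeff_X, Polynomial.coeff_C, -map_pow] at h0 h1
  exact hc ⟨c₁ + a, by linear_combination c₁ * h1 - h0⟩

namespace MvPolynomial

section Field

variable {K : Type*} [Field K]

theorem not_isSquare_neg_sq_X_sub_C {σ : Type*} (hK : ¬IsSquare (-1 : K)) (i : σ) (b : K) :
    ¬IsSquare (-(X i - C b) ^ 2 : MvPolynomial σ K) := by
  rintro ⟨s, hs⟩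
  exact hK ⟨eval (fun _ ↦ b + 1) s, by simpa using congrArg (eval fun _ ↦ b + 1) hs⟩

theorem prime_X_sub_C_sq_add_X_sub_C_sq (hK : ¬IsSquare (-1 : K)) (a b : K) :
    Prime ((X 0 - C a) ^ 2 + (X 1 - C b) ^ 2 : MvPolynomial (Fin 2) K) := by
  rw [← MulEquiv.prime_iff (finSuccEquiv K 1)]
  have hq : finSuccEquiv K 1 ((X 0 - C a) ^ 2 + (X 1 - C b) ^ 2) =
      (Polynomial.X - Polynomial.C (C a)) ^ 2 + Polynomial.C ((X 0 - C b) ^ 2) := by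
    simp [finSuccEquiv_apply]
    rfl
  rw [hq]
  exact (Polynomial.irreducible_X_sub_C_sq_add_C (not_isSquare_neg_sq_X_sub_C hK 0 b)).prime

end Field

section idealOfVars

variable {σ R : Type*} [CommSemiring R]

theorem mem_idealOfVars_iff {p : MvPolynomial σ R} :
    p ∈ idealOfVars σ R ↔ constantCoeff p = 0 := by
  rw [← pow_one (idealOfVars σ R), mem_pow_idealOfVars_iff']
  simp [Finsupp.degree_eq_zero_iff, constantCoeff]

theorem idealOfVars_eq_ker_constantCoeff :
    idealOfVars σ R = RingHom.ker (constantCoeff (σ := σ) (R := R)) :=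
  Ideal.ext fun _ ↦ mem_idealOfVars_iff

theorem isPrime_idealOfVars [IsDomain R] : (idealOfVars σ R).IsPrime := by
  rw [idealOfVars_eq_ker_constantCoeff]
  exact RingHom.ker_isPrime _

theorem idealOfVars_fin_two : idealOfVars (Fin 2) R = Ideal.span {X 0, X 1} := by
  refine congrArg Ideal.span (Set.ext fun _ ↦ ?_)
  simp [Fin.exists_fin_two, eq_comm]

end idealOfVars

end MvPolynomial

theorem Ideal.mem_span_singleton_mul_of_mul_mem {R : Type*} [CommSemiring R] [IsDomain R]
    {p r g : R} {J : Ideal R} (hp : Prime p) (hpr : ¬p ∣ r) (hJ : ∀ h, r * h ∈ J → h ∈ J)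
    (hg : r * g ∈ span {p} * J) : g ∈ span {p} * J := by
  obtain ⟨z, hz, hpz⟩ := mem_span_singleton_mul.mp hg
  obtain ⟨h, rfl⟩ := (hp.dvd_or_dvd ⟨z, hpz.symm⟩).resolve_left hpr
  have hzh : z = r * h := mul_left_cancel₀ hp.ne_zero (by rw [hpz]; ring)
  exact mem_span_singleton_mul.mpr ⟨h, hJ h (hzh ▸ hz), rfl⟩

/-- For `f_A = x_A((x_A-1)² + (x_B-2)²)` and `f_B = x_B((x_A-1)² + (x_B-2)²)`:
(i) the unique positive steady state is `(1,2)` (so there is ACR in both species, with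
ACR-values 1 and 2); (ii) `x_A - 1 ∉ I = ⟨f_A, f_B⟩` and `x_A - 1` is not a zero-divisor
of `I`. -/
theorem stmt_16
    (fA fB : MvPolynomial (Fin 2) ℝ)
    (hfA : fA = X 0 * ((X 0 - C 1) ^ 2 + (X 1 - C 2) ^ 2))
    (hfB : fB = X 1 * ((X 0 - C 1) ^ 2 + (X 1 - C 2) ^ 2))
    (I : Ideal (MvPolynomial (Fin 2) ℝ))
    (hI : I = Ideal.span {fA, fB}) :
    (∀ a b : ℝ,
      (0 < a ∧ 0 < b ∧ eval ![a, b] fA = 0 ∧ eval ![a, b] fB = 0) ↔ (a = 1 ∧ b = 2)) ∧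
    (X 0 - C 1) ∉ I ∧
    (∀ g : MvPolynomial (Fin 2) ℝ, (X 0 - C 1) * g ∈ I → g ∈ I) := by
  set q : MvPolynomial (Fin 2) ℝ := (X 0 - C 1) ^ 2 + (X 1 - C 2) ^ 2
  have hIq : I = Ideal.span {q} * idealOfVars (Fin 2) ℝ := by
    rw [hI, hfA, hfB, idealOfVars_fin_two, Ideal.span_mul_span', Set.singleton_mul,
      Set.image_pair, mul_comm q, mul_comm q]
  have hx : X 0 - C 1 ∉ idealOfVars (Fin 2) ℝ := by simp [mem_idealOfVars_iff]
  have hIle : I ≤ idealOfVars (Fin 2) ℝ := hIq ▸ Ideal.mul_le_right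
  -- `q` vanishes at `(1 + i, 3)`, where `x_A - 1` does not.
  have hq : ¬q ∣ X 0 - C 1 := by
    rintro ⟨c, hc⟩
    have := congrArg (aeval ![1 + Complex.I, 3]) hc
    norm_num [q] at this
  refine ⟨fun a b ↦ ?_, fun h ↦ hx (hIle h), fun g hg ↦ ?_⟩
  · subst hfA hfB
    constructor
    · rintro ⟨ha, -, hqa, -⟩
      have : (a - 1) ^ 2 + (b - 2) ^ 2 = 0 := by simpa [q, ha.ne'] using hqa
      constructor <;> nlinarith [sq_nonneg (a - 1), sq_nonneg (b - 2)]
    · rintro ⟨rfl, rfl⟩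
      norm_num [q]
  · rw [hIq] at hg ⊢
    exact Ideal.mem_span_singleton_mul_of_mul_mem
      (prime_X_sub_C_sq_add_X_sub_C_sq (fun ⟨r, hr⟩ ↦ by nlinarith [mul_self_nonneg r]) 1 2)
      hq (fun _ hmem ↦ (isPrime_idealOfVars.mem_or_mem hmem).resolve_left hx) hg
end

section
/- Let f₁ = x_B·x_C·((x_A−1)²·(x_B+3) + (x_C−2)) and f₂ = x_B·x_C·((x_A−1)·(x_B+3)² − (x_C−2)) in ℝ[x_A, x_B, x_C], and let I = ⟨f₁, f₂⟩. Then: (i) the set of points (a,b,c) ∈ ℝ³ with a,b,c > 0 and f₁(a,b,c) = f₂(a,b,c) = 0 is exactly {(1, b, 2) : b > 0}, so the system has ACR in species A with ACR-value 1 and in species C with ACR-value 2; and (ii) x_A − 1 is a zero-divisor of I: the polynomial h = f₁ + f₂ factors as h = (x_A − 1)·x_B·x_C·(x_B+3)·(x_A + x_B + 2) ∈ I, while x_A − 1 ∉ I and x_B·x_C·(x_B+3)·(x_A + x_B + 2) ∉ I. -/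
open MvPolynomial

/-- For `f₁ = x_B x_C ((x_A-1)²(x_B+3) + (x_C-2))` and
`f₂ = x_B x_C ((x_A-1)(x_B+3)² - (x_C-2))`:
(i) the positive steady states are exactly `{(1,b,2) : b > 0}` (ACR in `A` with value 1
and in `C` with value 2); (ii) `x_A - 1` is a zero-divisor of `I = ⟨f₁, f₂⟩`:
`f₁ + f₂ = (x_A-1)·x_B x_C (x_B+3)(x_A+x_B+2) ∈ I`, while neither factor lies in `I`. -/
theorem stmt_18
    (f₁ f₂ : MvPolynomial (Fin 3) ℝ)
    (hf₁ : f₁ = X 1 * X 2 * ((X 0 - C 1) ^ 2 * (X 1 + C 3) + (X 2 - C 2)))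
    (hf₂ : f₂ = X 1 * X 2 * ((X 0 - C 1) * (X 1 + C 3) ^ 2 - (X 2 - C 2)))
    (I : Ideal (MvPolynomial (Fin 3) ℝ))
    (hI : I = Ideal.span {f₁, f₂}) :
    (∀ a b c : ℝ,
      (0 < a ∧ 0 < b ∧ 0 < c ∧ eval ![a, b, c] f₁ = 0 ∧ eval ![a, b, c] f₂ = 0)
        ↔ (a = 1 ∧ 0 < b ∧ c = 2)) ∧
    (f₁ + f₂ = (X 0 - C 1) * (X 1 * X 2 * (X 1 + C 3) * (X 0 + X 1 + C 2))) ∧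
    f₁ + f₂ ∈ I ∧
    (X 0 - C 1) ∉ I ∧
    (X 1 * X 2 * (X 1 + C 3) * (X 0 + X 1 + C 2)) ∉ I := by
  subst hf₁ hf₂ hI
  refine ⟨?_, by simp only [map_one, map_ofNat]; ring, ?_, ?_, ?_⟩
  · intro a b c
    constructor
    · rintro ⟨ha, hb, hc, h1, h2⟩
      simp only [eval_mul, eval_add, eval_sub, eval_pow, eval_X, eval_C,
        Matrix.cons_val_zero, Matrix.cons_val_one, Matrix.head_cons,
        Matrix.cons_val_two, Matrix.tail_cons] at h1 h2
      have hbc : b * c ≠ 0 := by positivity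
      have e1 : (a - 1) ^ 2 * (b + 3) + (c - 2) = 0 := by
        rcases mul_eq_zero.mp h1 with h | h
        · exact absurd h hbc
        · exact h
      have e2 : (a - 1) * (b + 3) ^ 2 - (c - 2) = 0 := by
        rcases mul_eq_zero.mp h2 with h | h
        · exact absurd h hbc
        · exact h
      have hsum : (a - 1) * (b + 3) * (a + b + 2) = 0 := by nlinarith [e1, e2]
      have ha1 : a = 1 := by
        rcases mul_eq_zero.mp hsum with h | h
        · rcases mul_eq_zero.mp h with h' | h'
          · linarith
          · linarith
        · linarith
      refine ⟨ha1, hb, by nlinarith [e1]⟩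
    · rintro ⟨rfl, hb, rfl⟩
      refine ⟨one_pos, hb, two_pos, ?_, ?_⟩ <;>
        simp [eval_mul, eval_add, eval_sub, eval_pow]
  · exact Ideal.add_mem _ (Ideal.subset_span (Set.mem_insert _ _))
      (Ideal.subset_span (Set.mem_insert_of_mem _ rfl))
  · intro hmem
    rw [Ideal.mem_span_pair] at hmem
    obtain ⟨g₁, g₂, hg⟩ := hmem
    have := congrArg (eval ![(0 : ℝ), 0, 0]) hg
    simp [eval_mul, eval_add, eval_sub, eval_pow] at this
  · intro hmem
    rw [Ideal.mem_span_pair] at hmem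
    obtain ⟨g₁, g₂, hg⟩ := hmem
    have := congrArg (eval ![(1 : ℝ), 1, 2]) hg
    simp [eval_mul, eval_add, eval_sub, eval_pow] at this
    norm_num at this
end

section
/- In the polynomial ring ℝ[x_A, x_B, κ₁, κ₂], let 𝓛 = {(x_A, x_B, κ₁, κ₂) ∈ ℝ⁴_{>0} : κ₁x_B − κ₂x_A²x_B = 0} = {(x_A, x_B, κ₁, κ₂) ∈ ℝ⁴_{>0} : x_A = √(κ₁/κ₂)} (the positive steady-state/rate locus of the network {B → A, 2A+B → A+2B}). Then the vanishing ideal I(𝓛) = {h ∈ ℝ[x_A, x_B, κ₁, κ₂] : h(p) = 0 for all p ∈ 𝓛} equals the principal ideal ⟨κ₁ − κ₂x_A²⟩. -/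
/-!
Since `x_B > 0`, the locus is the positive part of the hypersurface `κ₁ = κ₂ x_A²`, so the ideal
`⟨κ₁ - κ₂ x_A²⟩` vanishes on it. Conversely, substituting `κ₂ x_A²` for `κ₁` changes `h` only by
a multiple of `κ₁ - κ₂ x_A²`, and turns a polynomial vanishing on the locus into one vanishing on
the whole open orthant, which must be zero.
-/

open MvPolynomial

namespace MvPolynomial

variable {R σ : Type*} [CommRing R] [DecidableEq σ]

theorem sub_bind₁_update_X_mem_span (i : σ) (g φ : MvPolynomial σ R) :
    φ - bind₁ (Function.update X i g) φ ∈ Ideal.span {X i - g} := by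
  set I := Ideal.span {(X i - g : MvPolynomial σ R)}
  have hcomp : (Ideal.Quotient.mkₐ R I).comp (bind₁ (Function.update X i g)) =
      Ideal.Quotient.mkₐ R I := by
    refine algHom_ext fun j => ?_
    rcases eq_or_ne j i with rfl | hj
    · simpa [Ideal.Quotient.mk_eq_mk_iff_sub_mem, I] using
        I.neg_mem (Ideal.mem_span_singleton_self (X j - g))
    · simp [Function.update_of_ne hj]
  rw [← Ideal.Quotient.mk_eq_mk_iff_sub_mem]
  exact (DFunLike.congr_fun hcomp φ).symm

theorem eval_bind₁_update_X (i : σ) (g φ : MvPolynomial σ R) (x : σ → R) :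
    eval x (bind₁ (Function.update X i g) φ) = eval (Function.update x i (eval x g)) φ := by
  simp only [eval, eval₂Hom_bind₁]
  congr 2 with j
  rcases eq_or_ne j i with rfl | hj <;> simp [Function.update_of_ne, *]

end MvPolynomial

/-- For the network `{B → A, 2A+B → A+2B}` with variables `x_A = X 0`, `x_B = X 1`,
`κ₁ = X 2`, `κ₂ = X 3`, the vanishing ideal of the positive steady-state/rate locus
`𝓛 = {(x_A,x_B,κ₁,κ₂) ∈ ℝ⁴_{>0} : κ₁x_B - κ₂x_A²x_B = 0}` is the principal ideal
`⟨κ₁ - κ₂x_A²⟩`. -/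
theorem stmt_19 :
    {h : MvPolynomial (Fin 4) ℝ |
        ∀ p : Fin 4 → ℝ, (∀ j, 0 < p j) →
          p 2 * p 1 - p 3 * (p 0) ^ 2 * p 1 = 0 → eval p h = 0}
      = ↑(Ideal.span {(X 2 - X 3 * (X 0) ^ 2 : MvPolynomial (Fin 4) ℝ)}) := by
  ext h
  simp only [Set.mem_ofPred_eq, SetLike.mem_coe]
  constructor
  · intro hvan
    have hsubst : bind₁ (Function.update X 2 (X 3 * X 0 ^ 2)) h = 0 := by
      refine funext_set (fun _ => Set.Ioi 0) (fun _ => Set.Ioi_infinite 0) fun x hx => ?_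
      have hx : ∀ j, 0 < x j := fun j => hx j trivial
      rw [eval_bind₁_update_X, map_zero]
      refine hvan _ (fun j => ?_) ?_
      · rcases eq_or_ne j 2 with rfl | hj
        · simp only [Function.update_self, map_mul, map_pow, eval_X]
          exact mul_pos (hx 3) (pow_pos (hx 0) 2)
        · simpa [Function.update_of_ne hj] using hx j
      · simp [Function.update_of_ne]
    have hdiff := sub_bind₁_update_X_mem_span 2 (X 3 * X 0 ^ 2) h
    rwa [hsubst, sub_zero] at hdiff
  · intro hmem p hp hrel
    obtain ⟨q, rfl⟩ := Ideal.mem_span_singleton'.mp hmem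
    have hκ : p 2 - p 3 * p 0 ^ 2 = 0 := by
      have : (p 2 - p 3 * p 0 ^ 2) * p 1 = 0 := by linear_combination hrel
      exact (mul_eq_zero.mp this).resolve_right (hp 1).ne'
    simp [hκ]
end
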